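/- Let D be a PvMD with nonzero nonunits x₁, x₂, …, xₙ ∈ D such that ((x₁, x₂, …, xₙ)D)^v = D, and suppose that for some j, 1 ≤ j ≤ n, the ring of fractions D_{x_j} is not a G-GCD domain. Let ∗ be the star operation of finite type defined by I^∗ := ⋂_{i=1}^n I D_{x_i} for every nonzero fractional ideal I of D. Then there exists a nonzero finitely generated ideal F of D such that F^v is not a ∗-invertible ideal; consequently the set of ∗-invertible ∗-ideals of D is strictly contained in the set of t-invertible t-ideals of D, i.e., Cl^∗(D) ⊊ Cl^t(D). -/

import Mathlib

/-!
Write `R = D_{x_j}`. A nonzero finitely generated ideal `F₀` of `R` with `F₀ᵛ` not invertible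
comes, after clearing denominators, from a finitely generated ideal `F` of `D` with `F R = F₀`.
As `F` is finitely generated, `(F R)⁻¹ ⊆ F⁻¹ R`, hence `Fᵛ ⊆ (F R)ᵛ`; also `F⁻¹ ⊆ (F R)⁻¹`.
So a relation `x_jᵏ ∈ Fᵛ F⁻¹` would make `(F R)ᵛ` invertible, and `Fᵛ` is not `∗`-invertible,
although it is a `t`-invertible `t`-ideal because `D` is a P`v`MD.

Conversely, `((x₁, …, xₙ)D)ᵛ = D` gives `⋂ᵢ D_{x_i} = D`: some power of `(x₁, …, xₙ)` lies in
`(x₁^{k₁}, …, xₙ^{kₙ})`, and `v` respects products. Hence `I^∗ ⊆ I^t` for every `I`, while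
`x_iᵏ ∈ I I⁻¹` forces `Iᵛ ⊆ I D_{x_i}`; so `∗`-invertible `∗`-ideals are `t`-invertible `t`-ideals.
-/

noncomputable section

/-- The `v`-operation `E ↦ (E⁻¹)⁻¹ = (R : (R : E))` on `R`-submodules of `K`. -/
def vOp (R K : Type*) [CommRing R] [Field K] [Algebra R K] (E : Submodule R K) :
    Submodule R K :=
  (1 : Submodule R K) / ((1 : Submodule R K) / E)

/-- The `t`-operation `E ↦ ⋃ {Jᵛ : J ⊆ E nonzero finitely generated}`. -/
def tOp (R K : Type*) [CommRing R] [Field K] [Algebra R K] (E : Submodule R K) :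
    Submodule R K :=
  ⨆ (J : Submodule R K) (_ : J ≠ ⊥) (_ : J.FG) (_ : J ≤ E), vOp R K J

/-- `I D_x = {z ∈ K : x^k • z ∈ I for some k ≥ 0}`, as a `D`-submodule of `K`. -/
def elemLocModule (D K : Type*) [CommRing D] [Field K] [Algebra D K]
    (x : D) (E : Submodule D K) : Submodule D K where
  carrier := {z : K | ∃ k : ℕ, x ^ k • z ∈ E}
  zero_mem' := ⟨0, by simp⟩
  add_mem' := by
    rintro z w ⟨k, hk⟩ ⟨m, hm⟩
    refine ⟨k + m, ?_⟩
    have hz : x ^ (k + m) • z = x ^ m • (x ^ k • z) := by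
      rw [pow_add, mul_comm, mul_smul]
    have hw : x ^ (k + m) • w = x ^ k • (x ^ m • w) := by rw [pow_add, mul_smul]
    rw [smul_add, hz, hw]
    exact Submodule.add_mem _ (Submodule.smul_mem _ _ hk) (Submodule.smul_mem _ _ hm)
  smul_mem' := by
    rintro r z ⟨k, hk⟩
    exact ⟨k, by rw [smul_comm]; exact Submodule.smul_mem _ _ hk⟩

/-- The ring of fractions `D_x` of `D` with respect to `{x^k : k ≥ 0}`, realized as the
subalgebra `{z ∈ K : x^k • z ∈ D for some k ≥ 0}` of the quotient field `K`. -/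
def elemLocSub (D K : Type*) [CommRing D] [Field K] [Algebra D K] (x : D) :
    Subalgebra D K where
  carrier := {z : K | ∃ k : ℕ, x ^ k • z ∈ (1 : Submodule D K)}
  algebraMap_mem' r := ⟨0, by simp⟩
  mul_mem' := by
    rintro z w ⟨k, hk⟩ ⟨m, hm⟩
    refine ⟨k + m, ?_⟩
    have h1 : (x ^ k • z) * (x ^ m • w) = (x ^ k * x ^ m) • (z * w) :=
      smul_mul_smul_comm (x ^ k) z (x ^ m) w
    have h2 := Submodule.mul_mem_mul hk hm
    rw [mul_one, h1, ← pow_add] at h2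
    exact h2
  add_mem' := by
    rintro z w ⟨k, hk⟩ ⟨m, hm⟩
    refine ⟨k + m, ?_⟩
    have hz : x ^ (k + m) • z = x ^ m • (x ^ k • z) := by
      rw [pow_add, mul_comm, mul_smul]
    have hw : x ^ (k + m) • w = x ^ k • (x ^ m • w) := by rw [pow_add, mul_smul]
    rw [smul_add, hz, hw]
    exact Submodule.add_mem _ (Submodule.smul_mem _ _ hk) (Submodule.smul_mem _ _ hm)

namespace Submodule

section Quotient

variable {R A : Type*} [CommSemiring R] [CommSemiring A] [Algebra R A]

theorem mem_div_span_iff {I : Submodule R A} {s : Set A} {z : A} :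
    z ∈ I / span R s ↔ ∀ a ∈ s, z * a ∈ I := by
  change span R s ≤ I.comap (LinearMap.mulLeft R z) ↔ _
  rw [span_le]
  rfl

theorem div_le_div_left {I E F : Submodule R A} (h : E ≤ F) : I / F ≤ I / E :=
  fun _ hz y hy => hz y (h hy)

theorem le_one_div_one_div (E : Submodule R A) : E ≤ 1 / (1 / E) :=
  le_div_iff_mul_le.2 mul_one_div_le_one

theorem one_div_one : (1 : Submodule R A) / 1 = 1 :=
  le_antisymm (fun z hz => mul_one z ▸ hz 1 (one_le.1 le_rfl)) (one_le_one_div.2 le_rfl)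

theorem map_algebraLinearMap_le_one (I : Ideal R) : map (Algebra.linearMap R A) I ≤ 1 :=
  one_eq_range (R := R) (A := A) ▸ LinearMap.map_le_range

end Quotient

section Tower

variable {D R A : Type*} [CommSemiring D] [CommSemiring R] [CommSemiring A] [Algebra D R]
  [Algebra R A] [Algebra D A] [IsScalarTower D R A]

theorem one_le_restrictScalars_one : (1 : Submodule D A) ≤ (1 : Submodule R A).restrictScalars D :=
  fun z hz => by
    obtain ⟨d, rfl⟩ := mem_one.1 hz
    exact mem_one.2 ⟨algebraMap D R d, (IsScalarTower.algebraMap_apply D R A d).symm⟩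

theorem restrictScalars_mul_le (M N : Submodule R A) :
    M.restrictScalars D * N.restrictScalars D ≤ (M * N).restrictScalars D :=
  mul_le.2 fun a ha b hb =>
    (restrictScalars_mem D _ _).2 (mul_mem_mul ((restrictScalars_mem D M a).1 ha)
      ((restrictScalars_mem D N b).1 hb))

theorem one_div_le_restrictScalars_one_div_span (E : Submodule D A) :
    1 / E ≤ (1 / span R (E : Set A)).restrictScalars D :=
  fun _ hb => mem_div_span_iff.2 fun e he =>
    (restrictScalars_mem D _ _).1 (one_le_restrictScalars_one (R := R) (hb e he))

end Tower

end Submodule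

open Submodule

section Divisorial

variable {R K : Type*} [CommRing R] [Field K] [Algebra R K] {E F : Submodule R K}

theorem le_vOp (E : Submodule R K) : E ≤ vOp R K E := le_one_div_one_div E

theorem vOp_mono (h : E ≤ F) : vOp R K E ≤ vOp R K F := div_le_div_left (div_le_div_left h)

theorem one_div_vOp (E : Submodule R K) : 1 / vOp R K E = 1 / E :=
  le_antisymm (div_le_div_left (le_vOp E)) (le_one_div_one_div _)

theorem vOp_vOp (E : Submodule R K) : vOp R K (vOp R K E) = vOp R K E := by
  rw [vOp, one_div_vOp]; rfl

theorem vOp_one : vOp R K 1 = 1 := by rw [vOp, Submodule.one_div_one, Submodule.one_div_one]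

theorem vOp_le_one (h : E ≤ 1) : vOp R K E ≤ 1 := vOp_one (R := R) (K := K) ▸ vOp_mono h

theorem vOp_mul_one_div_le_one (E : Submodule R K) : vOp R K E * (1 / E) ≤ 1 :=
  le_div_iff_mul_le.1 le_rfl

theorem vOp_mul_le (E F : Submodule R K) : vOp R K E * F ≤ vOp R K (E * F) := by
  refine le_div_iff_mul_le.2 ?_
  have hF : F * (1 / (E * F)) ≤ 1 / E :=
    le_div_iff_mul_le.2 (by rw [mul_right_comm, mul_comm F]; exact mul_one_div_le_one)
  calc vOp R K E * F * (1 / (E * F)) = vOp R K E * (F * (1 / (E * F))) := mul_assoc _ _ _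
    _ ≤ vOp R K E * (1 / E) := mul_le_mul' le_rfl hF
    _ ≤ 1 := vOp_mul_one_div_le_one E

theorem vOp_pow_eq_one (h : vOp R K E = 1) (m : ℕ) : vOp R K (E ^ m) = 1 := by
  have hE : E ≤ 1 := h ▸ le_vOp E
  induction m with
  | zero => rw [pow_zero, vOp_one]
  | succ m ih =>
    refine le_antisymm (vOp_le_one (pow_le_one' hE _)) ?_
    calc 1 = vOp R K (vOp R K E * E ^ m) := by rw [h, one_mul, ih]
      _ ≤ vOp R K (vOp R K (E * E ^ m)) := vOp_mono (vOp_mul_le E _)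
      _ = vOp R K (E ^ (m + 1)) := by rw [vOp_vOp, pow_succ']

theorem vOp_le_tOp {J : Submodule R K} (hJ : J ≠ ⊥) (hJfg : J.FG) (hJE : J ≤ E) :
    vOp R K J ≤ tOp R K E :=
  le_iSup₂_of_le J hJ (le_iSup₂_of_le hJfg hJE le_rfl)

theorem tOp_le {M : Submodule R K} (h : ∀ J, J ≠ ⊥ → J.FG → J ≤ E → vOp R K J ≤ M) :
    tOp R K E ≤ M :=
  iSup₂_le fun J hJ => iSup₂_le (h J hJ)

theorem tOp_mono (h : E ≤ F) : tOp R K E ≤ tOp R K F :=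
  tOp_le fun _ hJ hJfg hJE => vOp_le_tOp hJ hJfg (hJE.trans h)

theorem le_tOp (E : Submodule R K) : E ≤ tOp R K E := by
  intro z hz
  rcases eq_or_ne z 0 with rfl | hz0
  · exact zero_mem _
  exact vOp_le_tOp (by simpa using hz0) (fg_span_singleton z)
    ((span_singleton_le_iff_mem z E).2 hz) (le_vOp _ (mem_span_singleton_self z))

theorem tOp_le_vOp (E : Submodule R K) : tOp R K E ≤ vOp R K E :=
  tOp_le fun _ _ _ hJE => vOp_mono hJE

theorem tOp_le_one (h : E ≤ 1) : tOp R K E ≤ 1 := (tOp_le_vOp E).trans (vOp_le_one h)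

theorem tOp_vOp (E : Submodule R K) : tOp R K (vOp R K E) = vOp R K E :=
  le_antisymm ((tOp_le_vOp _).trans (vOp_vOp E).le) (le_tOp _)

theorem tOp_vOp_mul_one_div_vOp (h : tOp R K (E * (1 / E)) = 1) :
    tOp R K (vOp R K E * (1 / vOp R K E)) = 1 := by
  rw [one_div_vOp]
  refine le_antisymm (tOp_le_one (vOp_mul_one_div_le_one E)) ?_
  calc 1 = tOp R K (E * (1 / E)) := h.symm
    _ ≤ tOp R K (vOp R K E * (1 / E)) := tOp_mono (mul_le_mul' (le_vOp E) le_rfl)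

end Divisorial

section Localization

variable {D K : Type*} [CommRing D] [Field K] [Algebra D K] {x : D}

theorem pow_smul_mem_of_le {E : Submodule D K} {z : K} {l m : ℕ} (h : x ^ l • z ∈ E)
    (hlm : l ≤ m) : x ^ m • z ∈ E := by
  rw [← Nat.sub_add_cancel hlm, pow_add, mul_smul]
  exact E.smul_mem _ h

theorem le_elemLocModule (E : Submodule D K) : E ≤ elemLocModule D K x E :=
  fun z hz => ⟨0, by rwa [pow_zero, one_smul]⟩

theorem exists_pow_smul_mem_of_fg_le_elemLocModule {A E : Submodule D K} (hE : E.FG)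
    (h : E ≤ elemLocModule D K x A) : ∃ k, ∀ z ∈ E, x ^ k • z ∈ A := by
  induction E, hE using Submodule.fg_induction with
  | singleton z =>
    obtain ⟨k, hk⟩ := h (mem_span_singleton_self z)
    refine ⟨k, fun w hw => ?_⟩
    obtain ⟨c, rfl⟩ := mem_span_singleton.1 hw
    rw [smul_comm]
    exact A.smul_mem c hk
  | sup E₁ E₂ _ _ ih₁ ih₂ =>
    obtain ⟨k₁, hk₁⟩ := ih₁ (le_sup_left.trans h)
    obtain ⟨k₂, hk₂⟩ := ih₂ (le_sup_right.trans h)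
    refine ⟨k₁ + k₂, fun w hw => ?_⟩
    obtain ⟨y₁, hy₁, y₂, hy₂, rfl⟩ := mem_sup.1 hw
    rw [smul_add]
    exact A.add_mem (pow_smul_mem_of_le (hk₁ y₁ hy₁) (Nat.le_add_right _ _))
      (pow_smul_mem_of_le (hk₂ y₂ hy₂) (Nat.le_add_left _ _))

theorem vOp_le_elemLocModule {I : Submodule D K} (h : 1 ≤ elemLocModule D K x (I * (1 / I))) :
    vOp D K I ≤ elemLocModule D K x I := by
  obtain ⟨k, hk⟩ := one_le.1 h
  have hI : vOp D K I * (I * (1 / I)) ≤ I :=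
    calc vOp D K I * (I * (1 / I)) = I * (vOp D K I * (1 / I)) := mul_left_comm _ _ _
      _ ≤ I * 1 := mul_le_mul' le_rfl (vOp_mul_one_div_le_one I)
      _ = I := mul_one I
  refine fun u hu => ⟨k, ?_⟩
  rw [← mul_one u, ← mul_smul_comm]
  exact hI (mul_mem_mul hu hk)

end Localization

section StarOperation

variable {D K ι : Type*} [CommRing D] [Field K] [Algebra D K] {x : ι → D}

theorem iInf_elemLocModule_one [Finite ι]
    (hv : vOp D K (map (Algebra.linearMap D K) (Ideal.span (Set.range x))) = 1) :
    ⨅ i, elemLocModule D K (x i) 1 = 1 := by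
  refine le_antisymm (fun z hz => ?_) (le_iInf fun _ => le_elemLocModule 1)
  choose k hk using mem_iInf _ |>.1 hz
  obtain ⟨N, hN⟩ := Ideal.exists_pow_le_of_le_radical_of_fg
    (J := Ideal.span (Set.range fun i => x i ^ k i))
    (Ideal.span_le.2 (Set.range_subset_iff.2 fun i => ⟨k i, Ideal.subset_span ⟨i, rfl⟩⟩))
    (fg_span (Set.finite_range x))
  have hz : z ∈ 1 / map (Algebra.linearMap D K) (Ideal.span (Set.range fun i => x i ^ k i)) := by
    rw [Ideal.span, map_span, mem_div_span_iff]
    rintro _ ⟨_, ⟨i, rfl⟩, rfl⟩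
    rw [Algebra.linearMap_apply, mul_comm, ← Algebra.smul_def]
    exact hk i
  have hzN := div_le_div_left (map_mono hN) hz
  have hpow : map (Algebra.linearMap D K) (Ideal.span (Set.range x) ^ N) =
      map (Algebra.linearMap D K) (Ideal.span (Set.range x)) ^ N :=
    Submodule.map_pow _ (Algebra.ofId D K) N
  rwa [hpow, ← one_div_vOp, vOp_pow_eq_one hv, Submodule.one_div_one] at hzN

theorem iInf_elemLocModule_le_tOp [Finite ι] [Nonempty ι] (hx : ∀ i, algebraMap D K (x i) ≠ 0)
    (hv : vOp D K (map (Algebra.linearMap D K) (Ideal.span (Set.range x))) = 1)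
    (E : Submodule D K) : ⨅ i, elemLocModule D K (x i) E ≤ tOp D K E := by
  intro z hz
  rcases eq_or_ne z 0 with rfl | hz0
  · exact zero_mem _
  choose k hk using mem_iInf _ |>.1 hz
  obtain ⟨i₀⟩ := ‹Nonempty ι›
  have hJ : span D (Set.range fun i => x i ^ k i • z) ≠ ⊥ := by
    refine (Submodule.ne_bot_iff _).2 ⟨x i₀ ^ k i₀ • z, subset_span ⟨i₀, rfl⟩, ?_⟩
    rw [Algebra.smul_def, map_pow]
    exact mul_ne_zero (pow_ne_zero _ (hx i₀)) hz0
  refine vOp_le_tOp hJ (fg_span (Set.finite_range _)) (span_le.2 (Set.range_subset_iff.2 hk))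
    fun w hw => ?_
  rw [← iInf_elemLocModule_one hv]
  refine mem_iInf _ |>.2 fun i => ⟨k i, ?_⟩
  rw [mul_comm, ← mul_smul_comm]
  exact hw _ (subset_span ⟨i, rfl⟩)

theorem tOp_eq_of_iInf_elemLocModule {I : Submodule D K}
    (hI : ⨅ i, elemLocModule D K (x i) I = I)
    (hinv : ⨅ i, elemLocModule D K (x i) (I * (1 / I)) = 1) : tOp D K I = I := by
  refine le_antisymm ((tOp_le_vOp I).trans (le_trans ?_ hI.le)) (le_tOp I)
  exact le_iInf fun i => vOp_le_elemLocModule (hinv.ge.trans (iInf_le _ i))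

theorem tOp_mul_one_div_eq_one_of_iInf_elemLocModule [Finite ι] [Nonempty ι]
    (hx : ∀ i, algebraMap D K (x i) ≠ 0)
    (hv : vOp D K (map (Algebra.linearMap D K) (Ideal.span (Set.range x))) = 1)
    {I : Submodule D K} (hinv : ⨅ i, elemLocModule D K (x i) (I * (1 / I)) = 1) :
    tOp D K (I * (1 / I)) = 1 :=
  le_antisymm (tOp_le_one mul_one_div_le_one)
    (hinv.ge.trans (iInf_elemLocModule_le_tOp hx hv _))

end StarOperation

section ElemLocSub

variable {D K : Type*} [CommRing D] [Field K] [Algebra D K] {x : D}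

theorem restrictScalars_one_elemLocSub :
    (1 : Submodule (elemLocSub D K x) K).restrictScalars D = elemLocModule D K x 1 := by
  ext z
  rw [restrictScalars_mem, mem_one]
  exact ⟨fun ⟨r, hr⟩ => hr ▸ r.2, fun hz => ⟨⟨z, hz⟩, rfl⟩⟩

theorem isUnit_algebraMap_elemLocSub (hx : algebraMap D K x ≠ 0) :
    IsUnit (algebraMap D (elemLocSub D K x) x) := by
  have hinv : (algebraMap D K x)⁻¹ ∈ elemLocSub D K x :=
    ⟨1, by rw [pow_one, Algebra.smul_def, mul_inv_cancel₀ hx]; exact one_le.1 le_rfl⟩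
  exact IsUnit.of_mul_eq_one (⟨_, hinv⟩ : elemLocSub D K x) (Subtype.ext (mul_inv_cancel₀ hx))

theorem mem_of_pow_smul_mem_elemLocSub (hx : algebraMap D K x ≠ 0)
    (M : Submodule (elemLocSub D K x) K) {z : K} {m : ℕ} (h : x ^ m • z ∈ M) : z ∈ M := by
  rwa [← algebraMap_smul (elemLocSub D K x), map_pow,
    smul_mem_iff_of_isUnit _ ((isUnit_algebraMap_elemLocSub hx).pow m)] at h

theorem exists_ideal_fg_span_map_eq (hx : algebraMap D K x ≠ 0)
    {G : Submodule (elemLocSub D K x) K} (hG : G.FG) (hG1 : G ≤ 1) :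
    ∃ F : Ideal D, F.FG ∧
      span (elemLocSub D K x) (map (Algebra.linearMap D K) F : Set K) = G := by
  obtain ⟨s, rfl⟩ := hG
  have hs : span D (s : Set K) ≤ elemLocModule D K x 1 := by
    rw [span_le, ← restrictScalars_one_elemLocSub]
    exact fun z hz => hG1 (subset_span hz)
  obtain ⟨k, hk⟩ := exists_pow_smul_mem_of_fg_le_elemLocModule (fg_span s.finite_toSet) hs
  choose d hd using fun z : s => mem_one.1 (hk z (subset_span z.2))
  refine ⟨Ideal.span (Set.range d), fg_span (Set.finite_range d), le_antisymm ?_ ?_⟩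
  · rw [Ideal.span, map_span, span_span_of_tower, span_le]
    rintro _ ⟨_, ⟨z, rfl⟩, rfl⟩
    rw [Algebra.linearMap_apply, hd]
    exact smul_of_tower_mem _ _ (subset_span z.2)
  · refine span_le.2 fun z hz => mem_of_pow_smul_mem_elemLocSub hx _ (m := k) ?_
    rw [← hd ⟨z, hz⟩, ← Algebra.linearMap_apply]
    exact subset_span (mem_map_of_mem (Ideal.subset_span ⟨⟨z, hz⟩, rfl⟩))

theorem vOp_le_restrictScalars_vOp_span (hx : algebraMap D K x ≠ 0) {E : Submodule D K}
    (hE : E.FG) :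
    vOp D K E ≤
      (vOp (elemLocSub D K x) K (span (elemLocSub D K x) (E : Set K))).restrictScalars D := by
  intro a ha
  rw [restrictScalars_mem, vOp, mem_div_iff_forall_mul_mem]
  intro w hw
  have hwE : E.map (LinearMap.mulLeft D w) ≤ elemLocModule D K x 1 := by
    rintro _ ⟨e, he, rfl⟩
    rw [← restrictScalars_one_elemLocSub]
    exact hw e (subset_span he)
  obtain ⟨k, hk⟩ := exists_pow_smul_mem_of_fg_le_elemLocModule (hE.map _) hwE
  have hw' : x ^ k • w ∈ 1 / E := fun e he => by
    rw [smul_mul_assoc]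
    exact hk _ (mem_map_of_mem he)
  refine mem_of_pow_smul_mem_elemLocSub hx _ (m := k) ?_
  rw [← mul_smul_comm]
  exact (restrictScalars_mem D _ _).1 (one_le_restrictScalars_one (ha _ hw'))

theorem vOp_span_mul_one_div_vOp_eq_one (hx : algebraMap D K x ≠ 0) {E : Submodule D K}
    (hE : E.FG) (h : 1 ≤ elemLocModule D K x (vOp D K E * (1 / vOp D K E))) :
    vOp (elemLocSub D K x) K (span (elemLocSub D K x) (E : Set K)) *
      (1 / vOp (elemLocSub D K x) K (span (elemLocSub D K x) (E : Set K))) = 1 := by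
  set G := span (elemLocSub D K x) (E : Set K)
  obtain ⟨k, hk⟩ := one_le.1 h
  rw [one_div_vOp] at hk ⊢
  have hle : vOp D K E * (1 / E) ≤ (vOp (elemLocSub D K x) K G * (1 / G)).restrictScalars D :=
    (mul_le_mul' (vOp_le_restrictScalars_vOp_span hx hE)
      (one_div_le_restrictScalars_one_div_span E)).trans (restrictScalars_mul_le _ _)
  exact le_antisymm (vOp_mul_one_div_le_one G)
    (one_le.2 (mem_of_pow_smul_mem_elemLocSub hx _ ((restrictScalars_mem D _ _).1 (hle hk))))

end ElemLocSub

theorem exists_v_ideal_not_star_invertible_general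
    (D K : Type*) [CommRing D] [Field K] [Algebra D K] [IsFractionRing D K]
    -- `D` is a P`v`MD:
    (hpvmd : ∀ F : Ideal D, F ≠ ⊥ → F.FG →
      tOp D K (Submodule.map (Algebra.linearMap D K) F *
          ((1 : Submodule D K) / Submodule.map (Algebra.linearMap D K) F)) = 1)
    (n : ℕ) (x : Fin n → D)
    (hx0 : ∀ i, x i ≠ 0)
    -- `((x₁, …, xₙ)D)ᵛ = D`:
    (hv : vOp D K (Submodule.map (Algebra.linearMap D K)
      (Ideal.span (Set.range x))) = 1)
    -- some `D_{x_j}` is not a G-GCD domain: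
    (j : Fin n)
    (hj : ¬ ∀ F : Ideal ↥(elemLocSub D K (x j)), F ≠ ⊥ → F.FG →
      vOp ↥(elemLocSub D K (x j)) K (Submodule.map (Algebra.linearMap ↥(elemLocSub D K (x j)) K) F) *
          ((1 : Submodule ↥(elemLocSub D K (x j)) K) /
            vOp ↥(elemLocSub D K (x j)) K
              (Submodule.map (Algebra.linearMap ↥(elemLocSub D K (x j)) K) F)) = 1) :
    -- there is a nonzero finitely generated ideal `F` with `Fᵛ` not `∗`-invertible …
    (∃ F : Ideal D, F ≠ ⊥ ∧ F.FG ∧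
      (⨅ i : Fin n, elemLocModule D K (x i)
          (vOp D K (Submodule.map (Algebra.linearMap D K) F) *
            ((1 : Submodule D K) / vOp D K (Submodule.map (Algebra.linearMap D K) F)))) ≠
        (1 : Submodule D K)) ∧
    -- … consequently `Cl^∗(D) ⊊ Cl^t(D)`:
    {I : Submodule D K | I ≠ ⊥ ∧ IsFractional (nonZeroDivisors D) I ∧
        (⨅ i : Fin n, elemLocModule D K (x i) I) = I ∧
        (⨅ i : Fin n, elemLocModule D K (x i) (I * ((1 : Submodule D K) / I))) = 1} ⊂
      {I : Submodule D K | I ≠ ⊥ ∧ IsFractional (nonZeroDivisors D) I ∧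
        tOp D K I = I ∧ tOp D K (I * ((1 : Submodule D K) / I)) = 1} := by
  have hx : ∀ i, algebraMap D K (x i) ≠ 0 :=
    fun i => (map_ne_zero_iff _ (IsFractionRing.injective D K)).2 (hx0 i)
  have : Nonempty (Fin n) := ⟨j⟩
  push Not at hj
  obtain ⟨F₀, hF₀ne, hF₀fg, hF₀inv⟩ := hj
  obtain ⟨F, hFfg, hF⟩ := exists_ideal_fg_span_map_eq (hx j)
    (Submodule.FG.map (Algebra.linearMap _ K) hF₀fg) (map_algebraLinearMap_le_one F₀)
  set E := map (Algebra.linearMap D K) F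
  have hEfg : E.FG := Submodule.FG.map _ hFfg
  have hEne : E ≠ ⊥ := fun h => by
    rw [h, bot_coe, span_zero_singleton] at hF
    exact hF₀ne (map_injective_of_injective (f := Algebra.linearMap _ K) Subtype.val_injective
      (hF.symm.trans (Submodule.map_bot _).symm))
  have hFne : F ≠ ⊥ := by
    rintro rfl
    exact hEne (Submodule.map_bot _)
  have hnot : ⨅ i, elemLocModule D K (x i) (vOp D K E * (1 / vOp D K E)) ≠ 1 := fun h =>
    hF₀inv (hF ▸ vOp_span_mul_one_div_vOp_eq_one (hx j) hEfg (h.ge.trans (iInf_le _ j)))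
  refine ⟨⟨F, hFne, hFfg, hnot⟩, (Set.ssubset_iff_of_subset ?_).2 ⟨vOp D K E, ⟨?_, ?_,
    tOp_vOp E, tOp_vOp_mul_one_div_vOp (hpvmd F hFne hFfg)⟩, fun h => hnot h.2.2.2⟩⟩
  · rintro I ⟨hI0, hIfrac, hIstar, hIinv⟩
    exact ⟨hI0, hIfrac, tOp_eq_of_iInf_elemLocModule hIstar hIinv,
      tOp_mul_one_div_eq_one_of_iInf_elemLocModule hx hv hIinv⟩
  · exact ne_bot_of_le_ne_bot hEne (le_vOp E)
  · exact FractionalIdeal.isFractional_of_le_one _ (vOp_le_one (map_algebraLinearMap_le_one F))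

/-- **Proposition 2.6.** Let `D` be a P`v`MD with nonzero nonunits `x₁, …, xₙ` such that
`((x₁, …, xₙ)D)ᵛ = D`, and suppose that some `D_{x_j}` is not a G-GCD domain.  Let `∗` be the
star operation of finite type `I^∗ := ⋂ᵢ I D_{x_i}`.  Then there exists a nonzero finitely
generated ideal `F` of `D` such that `Fᵛ` is not `∗`-invertible; consequently the set of
`∗`-invertible `∗`-ideals is strictly contained in the set of `t`-invertible `t`-ideals,
i.e. `Cl^∗(D) ⊊ Cl^t(D)`. -/
theorem exists_v_ideal_not_star_invertible
    (D K : Type*) [CommRing D] [IsDomain D] [Field K] [Algebra D K] [IsFractionRing D K]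
    -- `D` is a P`v`MD:
    (hpvmd : ∀ F : Ideal D, F ≠ ⊥ → F.FG →
      tOp D K (Submodule.map (Algebra.linearMap D K) F *
          ((1 : Submodule D K) / Submodule.map (Algebra.linearMap D K) F)) = 1)
    (n : ℕ) (hn : 1 ≤ n) (x : Fin n → D)
    (hx0 : ∀ i, x i ≠ 0) (hxu : ∀ i, ¬ IsUnit (x i))
    -- `((x₁, …, xₙ)D)ᵛ = D`:
    (hv : vOp D K (Submodule.map (Algebra.linearMap D K)
      (Ideal.span (Set.range x))) = 1)
    -- some `D_{x_j}` is not a G-GCD domain: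
    (j : Fin n)
    (hj : ¬ ∀ F : Ideal ↥(elemLocSub D K (x j)), F ≠ ⊥ → F.FG →
      vOp ↥(elemLocSub D K (x j)) K (Submodule.map (Algebra.linearMap ↥(elemLocSub D K (x j)) K) F) *
          ((1 : Submodule ↥(elemLocSub D K (x j)) K) /
            vOp ↥(elemLocSub D K (x j)) K
              (Submodule.map (Algebra.linearMap ↥(elemLocSub D K (x j)) K) F)) = 1) :
    -- there is a nonzero finitely generated ideal `F` with `Fᵛ` not `∗`-invertible …
    (∃ F : Ideal D, F ≠ ⊥ ∧ F.FG ∧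
      (⨅ i : Fin n, elemLocModule D K (x i)
          (vOp D K (Submodule.map (Algebra.linearMap D K) F) *
            ((1 : Submodule D K) / vOp D K (Submodule.map (Algebra.linearMap D K) F)))) ≠
        (1 : Submodule D K)) ∧
    -- … consequently `Cl^∗(D) ⊊ Cl^t(D)`:
    {I : Submodule D K | I ≠ ⊥ ∧ IsFractional (nonZeroDivisors D) I ∧
        (⨅ i : Fin n, elemLocModule D K (x i) I) = I ∧
        (⨅ i : Fin n, elemLocModule D K (x i) (I * ((1 : Submodule D K) / I))) = 1} ⊂
      {I : Submodule D K | I ≠ ⊥ ∧ IsFractional (nonZeroDivisors D) I ∧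
        tOp D K I = I ∧ tOp D K (I * ((1 : Submodule D K) / I)) = 1} :=
  exists_v_ideal_not_star_invertible_general D K hpvmd n x hx0 hv j hj
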